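/- Let (ν_i) be a sequence of probability measures on ℤ with E(ν_i) = 0 and m₂(ν_i) < ∞ for all i, and suppose there is a constant C > 0 such that |ν̂_i(t)| ≤ e^{−Ct²} for all i and all t ∈ [−1/2, 1/2). Set μ_n = ν_1∗⋯∗ν_n and φ(n) = ∑_{i=1}^n m₂(ν_i). Then for every n ≥ 2 and every t ∈ [−1/2, 1/2), the second derivative of μ̂_n satisfies |μ̂_n''(t)| ≤ 4π² φ(n) e^{−(n−1)Ct²} + 16π⁴ φ(n)² e^{−(n−2)Ct²} |t|². -/

import Mathlib

open scoped BigOperators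
open Filter MeasureTheory

/-- A probability measure on `ℤ`, given as a nonnegative function summing to `1`. -/
def IsProbMeasure (ν : ℤ → ℝ) : Prop := (∀ k, 0 ≤ ν k) ∧ HasSum ν 1

/-- The Fourier transform `ν̂(t) = ∑_{k ∈ ℤ} ν(k) e^{2πikt}`. -/
noncomputable def ft (ν : ℤ → ℝ) (t : ℝ) : ℂ :=
  ∑' k : ℤ, (ν k : ℂ) * Complex.exp (2 * Real.pi * Complex.I * (k : ℂ) * (t : ℂ))

/-- Convolution of two measures on `ℤ`. -/
noncomputable def conv (μ ν : ℤ → ℝ) (k : ℤ) : ℝ := ∑' j : ℤ, μ (k - j) * ν j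

/-- `muN ν n = ν 0 ∗ ν 1 ∗ ⋯ ∗ ν n`. -/
noncomputable def muN (ν : ℕ → ℤ → ℝ) : ℕ → ℤ → ℝ
  | 0 => ν 0
  | n + 1 => conv (muN ν n) (ν (n + 1))

/-- The expectation `E(ν) = ∑ k ν(k)`. -/
noncomputable def expectation (ν : ℤ → ℝ) : ℝ := ∑' k : ℤ, (k : ℝ) * ν k

/-- The second moment `m₂(ν)`. -/
noncomputable def m2 (ν : ℤ → ℝ) : ℝ := ∑' k : ℤ, |(k : ℝ)| ^ 2 * ν k

/-- The first moment `m₁(ν)`. -/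
noncomputable def m1 (ν : ℤ → ℝ) : ℝ := ∑' k : ℤ, |(k : ℝ)| * ν k

/-- `ν` is strictly aperiodic: its support is not contained in any proper coset `r + βℤ`. -/
def StrictlyAperiodic (ν : ℤ → ℝ) : Prop :=
  ∀ β r : ℤ, β.natAbs ≠ 1 → ∃ k : ℤ, ν k ≠ 0 ∧ ¬ β ∣ (k - r)

/-- The mass `ν(βℤ + r)` that `ν` gives to the coset `βℤ + r`. -/
noncomputable def cosetMass (ν : ℤ → ℝ) (β r : ℤ) : ℝ :=
  ∑' k : ℤ, if β ∣ (k - r) then ν k else 0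

/-! ### Auxiliary lemmas -/

lemma norm_exp_I_sub_one_le (x : ℝ) : ‖Complex.exp (x * Complex.I) - 1‖ ≤ |x| := by
  rw [Complex.exp_mul_I]
  have h1 : Complex.cos x + Complex.sin x * Complex.I - 1 =
      ((Real.cos x - 1 : ℝ) : ℂ) + ((Real.sin x : ℝ) : ℂ) * Complex.I := by
    push_cast [← Complex.ofReal_cos, ← Complex.ofReal_sin]
    ring
  rw [h1, Complex.norm_add_mul_I]
  have h2 : (Real.cos x - 1) ^ 2 + Real.sin x ^ 2 ≤ x ^ 2 := by
    have hc := Real.one_sub_sq_div_two_le_cos (x := x)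
    have hs := Real.sin_sq_add_cos_sq x
    have hc1 := Real.cos_le_one x
    nlinarith
  calc Real.sqrt ((Real.cos x - 1) ^ 2 + Real.sin x ^ 2) ≤ Real.sqrt (x ^ 2) :=
        Real.sqrt_le_sqrt h2
    _ = |x| := by rw [Real.sqrt_sq_eq_abs]

lemma norm_e2pi (k : ℤ) (t : ℝ) :
    ‖Complex.exp (2 * (Real.pi : ℂ) * Complex.I * (k : ℂ) * (t : ℂ))‖ = 1 := by
  rw [show (2 * (Real.pi : ℂ) * Complex.I * (k : ℂ) * (t : ℂ)) =
      ((2 * Real.pi * (k : ℝ) * t : ℝ) : ℂ) * Complex.I by push_cast; ring]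
  exact Complex.norm_exp_ofReal_mul_I _

lemma norm_e2pi_sub_one (k : ℤ) (t : ℝ) :
    ‖Complex.exp (2 * (Real.pi : ℂ) * Complex.I * (k : ℂ) * (t : ℂ)) - 1‖ ≤
      2 * Real.pi * |(k : ℝ)| * |t| := by
  rw [show (2 * (Real.pi : ℂ) * Complex.I * (k : ℂ) * (t : ℂ)) =
      ((2 * Real.pi * (k : ℝ) * t : ℝ) : ℂ) * Complex.I by push_cast; ring]
  calc ‖Complex.exp (((2 * Real.pi * (k : ℝ) * t : ℝ) : ℂ) * Complex.I) - 1‖ ≤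
        |2 * Real.pi * (k : ℝ) * t| := norm_exp_I_sub_one_le _
    _ = 2 * Real.pi * |(k : ℝ)| * |t| := by
        rw [abs_mul, abs_mul, abs_mul]
        rw [_root_.abs_of_nonneg (by norm_num : (0:ℝ) ≤ 2), _root_.abs_of_nonneg Real.pi_nonneg]

lemma norm_coeff (k : ℤ) :
    ‖(2 * (Real.pi : ℂ) * Complex.I * (k : ℂ))‖ = 2 * Real.pi * |(k : ℝ)| := by
  rw [show (2 * (Real.pi : ℂ) * Complex.I * (k : ℂ)) =
      ((2 * Real.pi * (k : ℝ) : ℝ) : ℂ) * Complex.I by push_cast; ring]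
  simp [norm_mul, Complex.norm_real, abs_mul,
    _root_.abs_of_nonneg Real.pi_nonneg]

/-- First derivative series of `ft`. -/
noncomputable def D1f (ν : ℤ → ℝ) (t : ℝ) : ℂ :=
  ∑' k : ℤ, (2 * (Real.pi : ℂ) * Complex.I * (k : ℂ)) * (ν k : ℂ) *
    Complex.exp (2 * Real.pi * Complex.I * (k : ℂ) * (t : ℂ))

/-- Second derivative series of `ft`. -/
noncomputable def D2f (ν : ℤ → ℝ) (t : ℝ) : ℂ :=
  ∑' k : ℤ, (2 * (Real.pi : ℂ) * Complex.I * (k : ℂ)) ^ 2 * (ν k : ℂ) *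
    Complex.exp (2 * Real.pi * Complex.I * (k : ℂ) * (t : ℂ))

section

set_option linter.unusedSectionVars false

variable {ν : ℤ → ℝ} (hnn : ∀ k, 0 ≤ ν k) (hsum : Summable ν)
  (hm2s : Summable fun k : ℤ => |(k : ℝ)| ^ 2 * ν k)

include hnn hm2s hsum

lemma summable_m1' : Summable fun k : ℤ => |(k : ℝ)| * ν k := by
  apply Summable.of_nonneg_of_le (fun k => mul_nonneg (abs_nonneg _) (hnn k))
    (fun k => ?_) (hm2s.add hsum)
  rcases eq_or_ne k 0 with rfl | hk
  · simpa using hnn 0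
  · have h1 : (1 : ℝ) ≤ |(k : ℝ)| := by
      rw [← Int.cast_abs]
      exact_mod_cast Int.one_le_abs (by omega)
    have h2 : |(k : ℝ)| ≤ |(k : ℝ)| ^ 2 := by nlinarith
    nlinarith [mul_le_mul_of_nonneg_right h2 (hnn k), hnn k]

lemma norm_term0 (k : ℤ) (t : ℝ) :
    ‖(ν k : ℂ) * Complex.exp (2 * Real.pi * Complex.I * (k : ℂ) * (t : ℂ))‖ = ν k := by
  rw [norm_mul, norm_e2pi, mul_one, Complex.norm_real, Real.norm_eq_abs,
    _root_.abs_of_nonneg (hnn k)]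

lemma norm_term1 (k : ℤ) (t : ℝ) :
    ‖(2 * (Real.pi : ℂ) * Complex.I * (k : ℂ)) * (ν k : ℂ) *
      Complex.exp (2 * Real.pi * Complex.I * (k : ℂ) * (t : ℂ))‖ =
      2 * Real.pi * (|(k : ℝ)| * ν k) := by
  rw [norm_mul, norm_mul, norm_e2pi, mul_one, norm_coeff, Complex.norm_real,
    Real.norm_eq_abs, _root_.abs_of_nonneg (hnn k)]
  ring

lemma norm_term2 (k : ℤ) (t : ℝ) :
    ‖(2 * (Real.pi : ℂ) * Complex.I * (k : ℂ)) ^ 2 * (ν k : ℂ) *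
      Complex.exp (2 * Real.pi * Complex.I * (k : ℂ) * (t : ℂ))‖ =
      4 * Real.pi ^ 2 * (|(k : ℝ)| ^ 2 * ν k) := by
  rw [norm_mul, norm_mul, norm_e2pi, mul_one, norm_pow, norm_coeff, Complex.norm_real,
    Real.norm_eq_abs, _root_.abs_of_nonneg (hnn k)]
  ring

lemma summable_term0 (t : ℝ) :
    Summable fun k : ℤ =>
      (ν k : ℂ) * Complex.exp (2 * Real.pi * Complex.I * (k : ℂ) * (t : ℂ)) := by
  apply Summable.of_norm
  apply Summable.congr hsum
  intro k
  exact (norm_term0 hnn hsum hm2s k t).symm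

lemma summable_term1 (t : ℝ) :
    Summable fun k : ℤ => (2 * (Real.pi : ℂ) * Complex.I * (k : ℂ)) * (ν k : ℂ) *
      Complex.exp (2 * Real.pi * Complex.I * (k : ℂ) * (t : ℂ)) := by
  apply Summable.of_norm
  apply Summable.congr (((summable_m1' hnn hsum hm2s).mul_left (2 * Real.pi)))
  intro k
  exact (norm_term1 hnn hsum hm2s k t).symm

lemma hasDerivAt_ft (t : ℝ) : HasDerivAt (ft ν) (D1f ν t) t := by
  have key := hasDerivAt_tsum (u := fun k : ℤ => 2 * Real.pi * (|(k : ℝ)| * ν k))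
    (g := fun (k : ℤ) (s : ℝ) =>
      (ν k : ℂ) * Complex.exp (2 * Real.pi * Complex.I * (k : ℂ) * (s : ℂ)))
    (g' := fun (k : ℤ) (s : ℝ) =>
      (2 * (Real.pi : ℂ) * Complex.I * (k : ℂ)) * (ν k : ℂ) *
        Complex.exp (2 * Real.pi * Complex.I * (k : ℂ) * (s : ℂ)))
    (y₀ := 0)
    ((summable_m1' hnn hsum hm2s).mul_left (2 * Real.pi))
    ?_ ?_ (summable_term0 hnn hsum hm2s 0) t
  · exact key
  · intro k s
    have h0 : HasDerivAt (fun s : ℝ => (s : ℂ)) 1 s := by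
      simpa using (hasDerivAt_id s).ofReal_comp
    have h1 := ((h0.const_mul (2 * (Real.pi : ℂ) * Complex.I * (k : ℂ))).cexp).const_mul
      ((ν k : ℂ))
    exact h1.congr_deriv (by ring)
  · intro k s
    rw [norm_term1 hnn hsum hm2s k s]

lemma hasDerivAt_D1f (t : ℝ) : HasDerivAt (D1f ν) (D2f ν t) t := by
  have key := hasDerivAt_tsum (u := fun k : ℤ => 4 * Real.pi ^ 2 * (|(k : ℝ)| ^ 2 * ν k))
    (g := fun (k : ℤ) (s : ℝ) =>
      (2 * (Real.pi : ℂ) * Complex.I * (k : ℂ)) * (ν k : ℂ) *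
        Complex.exp (2 * Real.pi * Complex.I * (k : ℂ) * (s : ℂ)))
    (g' := fun (k : ℤ) (s : ℝ) =>
      (2 * (Real.pi : ℂ) * Complex.I * (k : ℂ)) ^ 2 * (ν k : ℂ) *
        Complex.exp (2 * Real.pi * Complex.I * (k : ℂ) * (s : ℂ)))
    (y₀ := 0)
    (hm2s.mul_left (4 * Real.pi ^ 2))
    ?_ ?_ (summable_term1 hnn hsum hm2s 0) t
  · exact key
  · intro k s
    have h0 : HasDerivAt (fun s : ℝ => (s : ℂ)) 1 s := by
      simpa using (hasDerivAt_id s).ofReal_comp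
    have h1 := ((h0.const_mul (2 * (Real.pi : ℂ) * Complex.I * (k : ℂ))).cexp).const_mul
      ((2 * (Real.pi : ℂ) * Complex.I * (k : ℂ)) * (ν k : ℂ))
    exact h1.congr_deriv (by ring)
  · intro k s
    rw [norm_term2 hnn hsum hm2s k s]

lemma norm_D2f_le (t : ℝ) : ‖D2f ν t‖ ≤ 4 * Real.pi ^ 2 * m2 ν := by
  apply tsum_of_norm_bounded (hm2s.hasSum.mul_left (4 * Real.pi ^ 2))
  intro k
  rw [norm_term2 hnn hsum hm2s k t]

lemma norm_D1f_le (hEx : expectation ν = 0) (t : ℝ) :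
    ‖D1f ν t‖ ≤ 4 * Real.pi ^ 2 * m2 ν * |t| := by
  have hm1 := summable_m1' hnn hsum hm2s
  have hsc : Summable fun k : ℤ => (2 * (Real.pi : ℂ) * Complex.I * (k : ℂ)) * (ν k : ℂ) := by
    apply Summable.of_norm
    apply Summable.congr (hm1.mul_left (2 * Real.pi))
    intro k
    rw [norm_mul, norm_coeff, Complex.norm_real, Real.norm_eq_abs, _root_.abs_of_nonneg (hnn k)]
    ring
  have hse := summable_term1 hnn hsum hm2s t
  have hzero : ∑' k : ℤ, (2 * (Real.pi : ℂ) * Complex.I * (k : ℂ)) * (ν k : ℂ) = 0 := by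
    calc ∑' k : ℤ, (2 * (Real.pi : ℂ) * Complex.I * (k : ℂ)) * (ν k : ℂ)
        = ∑' k : ℤ, (2 * (Real.pi : ℂ) * Complex.I) * (((k : ℝ) * ν k : ℝ) : ℂ) := by
          apply tsum_congr; intro k; push_cast; ring
      _ = (2 * (Real.pi : ℂ) * Complex.I) * ∑' k : ℤ, (((k : ℝ) * ν k : ℝ) : ℂ) := tsum_mul_left
      _ = (2 * (Real.pi : ℂ) * Complex.I) * ((expectation ν : ℝ) : ℂ) := by
          rw [← Complex.ofReal_tsum]; rfl
      _ = 0 := by rw [hEx]; simp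
  have key : D1f ν t = ∑' k : ℤ, (2 * (Real.pi : ℂ) * Complex.I * (k : ℂ)) * (ν k : ℂ) *
      (Complex.exp (2 * Real.pi * Complex.I * (k : ℂ) * (t : ℂ)) - 1) := by
    calc D1f ν t = (∑' k : ℤ, (2 * (Real.pi : ℂ) * Complex.I * (k : ℂ)) * (ν k : ℂ) *
          Complex.exp (2 * Real.pi * Complex.I * (k : ℂ) * (t : ℂ))) -
          ∑' k : ℤ, (2 * (Real.pi : ℂ) * Complex.I * (k : ℂ)) * (ν k : ℂ) := by
          rw [hzero, sub_zero]; rfl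
      _ = ∑' k : ℤ, ((2 * (Real.pi : ℂ) * Complex.I * (k : ℂ)) * (ν k : ℂ) *
          Complex.exp (2 * Real.pi * Complex.I * (k : ℂ) * (t : ℂ)) -
          (2 * (Real.pi : ℂ) * Complex.I * (k : ℂ)) * (ν k : ℂ)) := (Summable.tsum_sub hse hsc).symm
      _ = _ := by apply tsum_congr; intro k; ring
  rw [key]
  have hbound : ∀ k : ℤ, ‖(2 * (Real.pi : ℂ) * Complex.I * (k : ℂ)) * (ν k : ℂ) *
      (Complex.exp (2 * Real.pi * Complex.I * (k : ℂ) * (t : ℂ)) - 1)‖ ≤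
      (4 * Real.pi ^ 2 * |t|) * (|(k : ℝ)| ^ 2 * ν k) := by
    intro k
    rw [norm_mul, norm_mul, norm_coeff, Complex.norm_real, Real.norm_eq_abs,
      _root_.abs_of_nonneg (hnn k)]
    calc 2 * Real.pi * |(k : ℝ)| * ν k *
        ‖Complex.exp (2 * Real.pi * Complex.I * (k : ℂ) * (t : ℂ)) - 1‖ ≤
        2 * Real.pi * |(k : ℝ)| * ν k * (2 * Real.pi * |(k : ℝ)| * |t|) := by
          apply mul_le_mul_of_nonneg_left (norm_e2pi_sub_one k t)
          have := hnn k
          positivity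
      _ = (4 * Real.pi ^ 2 * |t|) * (|(k : ℝ)| ^ 2 * ν k) := by ring
  calc ‖∑' k : ℤ, (2 * (Real.pi : ℂ) * Complex.I * (k : ℂ)) * (ν k : ℂ) *
      (Complex.exp (2 * Real.pi * Complex.I * (k : ℂ) * (t : ℂ)) - 1)‖ ≤
      (4 * Real.pi ^ 2 * |t|) * m2 ν :=
        tsum_of_norm_bounded (hm2s.hasSum.mul_left (4 * Real.pi ^ 2 * |t|)) hbound
    _ = 4 * Real.pi ^ 2 * m2 ν * |t| := by ring

end

/-! ### Convolution lemmas -/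

noncomputable def eK (t : ℝ) (k : ℤ) : ℂ :=
  Complex.exp (2 * Real.pi * Complex.I * (k : ℂ) * (t : ℂ))

lemma norm_eK (t : ℝ) (k : ℤ) : ‖eK t k‖ = 1 := norm_e2pi k t

lemma eK_add (t : ℝ) (m j : ℤ) : eK t (m + j) = eK t m * eK t j := by
  rw [eK, eK, eK, ← Complex.exp_add]
  congr 1
  push_cast
  ring

lemma ft_eq (ν : ℤ → ℝ) (t : ℝ) : ft ν t = ∑' k : ℤ, (ν k : ℂ) * eK t k := rfl

def shearEquiv : ℤ × ℤ ≃ ℤ × ℤ where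
  toFun p := (p.1 + p.2, p.2)
  invFun p := (p.1 - p.2, p.2)
  left_inv p := by simp
  right_inv p := by simp

section
variable {μ ν : ℤ → ℝ} (hμ : IsProbMeasure μ) (hν : IsProbMeasure ν)
include hμ hν

lemma summable_shear : Summable fun p : ℤ × ℤ => μ (p.1 - p.2) * ν p.2 := by
  have hs : Summable fun p : ℤ × ℤ => μ p.1 * ν p.2 :=
    hμ.2.summable.mul_of_nonneg hν.2.summable hμ.1 hν.1
  exact (shearEquiv.symm.summable_iff (f := fun p : ℤ × ℤ => μ p.1 * ν p.2)).2 hs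

lemma hasSum_conv_fiber (k : ℤ) : HasSum (fun j : ℤ => μ (k - j) * ν j) (conv μ ν k) := by
  have hb : ∀ j : ℤ, μ (k - j) * ν j ≤ ν j := fun j => by
    have hle : μ (k - j) ≤ 1 := le_hasSum hμ.2 (k - j) (fun _ _ => hμ.1 _)
    nlinarith [hν.1 j, hμ.1 (k - j)]
  have hsum : Summable fun j : ℤ => μ (k - j) * ν j :=
    Summable.of_nonneg_of_le (fun j => mul_nonneg (hμ.1 _) (hν.1 _)) hb hν.2.summable
  exact hsum.hasSum

lemma IsProbMeasure.conv_of : IsProbMeasure (conv μ ν) := by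
  constructor
  · intro k
    exact tsum_nonneg fun j => mul_nonneg (hμ.1 _) (hν.1 _)
  · have hs : Summable fun p : ℤ × ℤ => μ p.1 * ν p.2 :=
      hμ.2.summable.mul_of_nonneg hν.2.summable hμ.1 hν.1
    have h1 : HasSum (fun p : ℤ × ℤ => μ p.1 * ν p.2) 1 := by
      have heq := hμ.2.mul_eq hν.2 hs.hasSum
      rw [show (1 : ℝ) = 1 * 1 by ring, heq]
      exact hs.hasSum
    have h2 : HasSum (fun p : ℤ × ℤ => μ (p.1 - p.2) * ν p.2) 1 :=
      (shearEquiv.symm.hasSum_iff (f := fun p : ℤ × ℤ => μ p.1 * ν p.2)).2 h1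
    exact h2.prod_fiberwise (hasSum_conv_fiber hμ hν)

lemma ft_conv (t : ℝ) : ft (conv μ ν) t = ft μ t * ft ν t := by
  have hG : Summable fun p : ℤ × ℤ => ((μ (p.1 - p.2) * ν p.2 : ℝ) : ℂ) * eK t p.1 := by
    apply Summable.of_norm
    apply Summable.congr (summable_shear hμ hν)
    intro p
    rw [norm_mul, norm_eK, mul_one, Complex.norm_real, Real.norm_eq_abs,
      _root_.abs_of_nonneg (mul_nonneg (hμ.1 _) (hν.1 _))]
  have hsμn : Summable fun k : ℤ => ‖(μ k : ℂ) * eK t k‖ := by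
    apply Summable.congr hμ.2.summable
    intro k
    rw [norm_mul, norm_eK, mul_one, Complex.norm_real, Real.norm_eq_abs,
      _root_.abs_of_nonneg (hμ.1 k)]
  have hsνn : Summable fun k : ℤ => ‖(ν k : ℂ) * eK t k‖ := by
    apply Summable.congr hν.2.summable
    intro k
    rw [norm_mul, norm_eK, mul_one, Complex.norm_real, Real.norm_eq_abs,
      _root_.abs_of_nonneg (hν.1 k)]
  have step1 : ft (conv μ ν) t = ∑' p : ℤ × ℤ, ((μ (p.1 - p.2) * ν p.2 : ℝ) : ℂ) * eK t p.1 := by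
    rw [ft_eq, Summable.tsum_prod' hG (fun b => hG.prod_factor b)]
    apply tsum_congr
    intro k
    have hfiber : ((conv μ ν k : ℝ) : ℂ) = ∑' j : ℤ, ((μ (k - j) * ν j : ℝ) : ℂ) := by
      rw [← Complex.ofReal_tsum]
      rfl
    calc ((conv μ ν k : ℝ) : ℂ) * eK t k
        = (∑' j : ℤ, ((μ (k - j) * ν j : ℝ) : ℂ)) * eK t k := by rw [hfiber]
      _ = ∑' j : ℤ, ((μ (k - j) * ν j : ℝ) : ℂ) * eK t k := tsum_mul_right.symm
  have step2 : (∑' p : ℤ × ℤ, ((μ (p.1 - p.2) * ν p.2 : ℝ) : ℂ) * eK t p.1) =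
      ∑' p : ℤ × ℤ, ((μ p.1 : ℂ) * eK t p.1) * ((ν p.2 : ℂ) * eK t p.2) := by
    rw [← shearEquiv.tsum_eq (f := fun p : ℤ × ℤ => ((μ (p.1 - p.2) * ν p.2 : ℝ) : ℂ) * eK t p.1)]
    apply tsum_congr
    intro p
    show ((μ (p.1 + p.2 - p.2) * ν p.2 : ℝ) : ℂ) * eK t (p.1 + p.2) = _
    rw [add_sub_cancel_right, eK_add]
    push_cast
    ring
  rw [step1, step2, ft_eq, ft_eq]
  exact (tsum_mul_tsum_of_summable_norm hsμn hsνn).symm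

end

set_option maxHeartbeats 1600000 in
/-- with `μ_n = ν_0 ∗ ⋯ ∗ ν_n` (a convolution of `n + 1` of the measures)
and `φ(n) = ∑_{i=0}^n m₂(ν_i)`, under the stated hypotheses one has, for every `n ≥ 1`
(i.e. at least two factors) and `t ∈ [-1/2, 1/2)`,
`|μ̂_n''(t)| ≤ 4π² φ(n) e^{-nCt²} + 16π⁴ φ(n)² e^{-(n-1)Ct²} |t|²`
(the exponents `n` and `n - 1` being "number of factors minus one/two"). -/
theorem second_deriv_fourier_conv_bound
    (ν : ℕ → ℤ → ℝ)
    (hprob : ∀ i, IsProbMeasure (ν i))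
    (hE : ∀ i, expectation (ν i) = 0)
    (hm2 : ∀ i, Summable fun k : ℤ => |(k : ℝ)| ^ 2 * ν i k)
    (C : ℝ) (hC : 0 < C)
    (hft : ∀ i, ∀ t ∈ Set.Ico (-(1 : ℝ) / 2) (1 / 2),
      ‖ft (ν i) t‖ ≤ Real.exp (-C * t ^ 2)) :
    ∀ n : ℕ, 1 ≤ n → ∀ t ∈ Set.Ico (-(1 : ℝ) / 2) (1 / 2),
      ‖iteratedDeriv 2 (ft (muN ν n)) t‖ ≤
        4 * Real.pi ^ 2 * (∑ i ∈ Finset.range (n + 1), m2 (ν i)) *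
            Real.exp (-(n : ℝ) * C * t ^ 2) +
          16 * Real.pi ^ 4 * (∑ i ∈ Finset.range (n + 1), m2 (ν i)) ^ 2 *
            Real.exp (-((n : ℝ) - 1) * C * t ^ 2) * |t| ^ 2 := by
  have hPM : ∀ n : ℕ, IsProbMeasure (muN ν n) := by
    intro n
    induction n with
    | zero => exact hprob 0
    | succ n ih => exact ih.conv_of (hprob (n + 1))
  have hm2nn : ∀ i, 0 ≤ m2 (ν i) := fun i =>
    tsum_nonneg fun k => mul_nonneg (by positivity) ((hprob i).1 k)
  have hΦnn : ∀ n : ℕ, 0 ≤ ∑ i ∈ Finset.range (n + 1), m2 (ν i) := fun n =>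
    Finset.sum_nonneg fun i _ => hm2nn i
  have key : ∀ n : ℕ, ∃ g h : ℝ → ℂ,
      (∀ t, HasDerivAt (ft (muN ν n)) (g t) t) ∧ (∀ t, HasDerivAt g (h t) t) ∧
      (∀ t ∈ Set.Ico (-(1 : ℝ) / 2) (1 / 2),
        ‖ft (muN ν n) t‖ ≤ Real.exp (-((n : ℝ) + 1) * C * t ^ 2) ∧
        ‖g t‖ ≤ 4 * Real.pi ^ 2 * (∑ i ∈ Finset.range (n + 1), m2 (ν i)) * |t| *
          Real.exp (-(n : ℝ) * C * t ^ 2) ∧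
        ‖h t‖ ≤ 4 * Real.pi ^ 2 * (∑ i ∈ Finset.range (n + 1), m2 (ν i)) *
            Real.exp (-(n : ℝ) * C * t ^ 2) +
          16 * Real.pi ^ 4 * (∑ i ∈ Finset.range (n + 1), m2 (ν i)) ^ 2 *
            Real.exp (-((n : ℝ) - 1) * C * t ^ 2) * t ^ 2) := by
    intro n
    induction n with
    | zero =>
      refine ⟨D1f (ν 0), D2f (ν 0), ?_, ?_, ?_⟩
      · intro t
        exact hasDerivAt_ft (hprob 0).1 (hprob 0).2.summable (hm2 0) t
      · intro t
        exact hasDerivAt_D1f (hprob 0).1 (hprob 0).2.summable (hm2 0) t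
      · intro t ht
        have hft0 := hft 0 t ht
        have hd1 := norm_D1f_le (hprob 0).1 (hprob 0).2.summable (hm2 0) (hE 0) t
        have hd2 := norm_D2f_le (hprob 0).1 (hprob 0).2.summable (hm2 0) t
        refine ⟨?_, ?_, ?_⟩
        · show ‖ft (ν 0) t‖ ≤ _
          convert hft0 using 2
          push_cast
          ring
        · calc ‖D1f (ν 0) t‖ ≤ 4 * Real.pi ^ 2 * m2 (ν 0) * |t| := hd1
            _ = 4 * Real.pi ^ 2 * (∑ i ∈ Finset.range (0 + 1), m2 (ν i)) * |t| *
                Real.exp (-((0 : ℕ) : ℝ) * C * t ^ 2) := by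
              rw [Finset.sum_range_one]
              norm_num
        · have hpos : 0 ≤ 16 * Real.pi ^ 4 * (∑ i ∈ Finset.range (0 + 1), m2 (ν i)) ^ 2 *
              Real.exp (-(((0 : ℕ) : ℝ) - 1) * C * t ^ 2) * t ^ 2 := by positivity
          have he0 : Real.exp (-((0 : ℕ) : ℝ) * C * t ^ 2) = 1 := by norm_num
          calc ‖D2f (ν 0) t‖ ≤ 4 * Real.pi ^ 2 * m2 (ν 0) := hd2
            _ = 4 * Real.pi ^ 2 * (∑ i ∈ Finset.range (0 + 1), m2 (ν i)) *
                Real.exp (-((0 : ℕ) : ℝ) * C * t ^ 2) := by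
              rw [Finset.sum_range_one, he0, mul_one]
            _ ≤ _ := le_add_of_nonneg_right hpos
    | succ n ih =>
      obtain ⟨g, h, hg, hh, hbds⟩ := ih
      have hPMn := hPM n
      have hpn := hprob (n + 1)
      have hfteq : ft (muN ν (n + 1)) = fun s => ft (muN ν n) s * ft (ν (n + 1)) s :=
        funext fun s => ft_conv hPMn hpn s
      have hf' : ∀ s, HasDerivAt (ft (ν (n + 1))) (D1f (ν (n + 1)) s) s := fun s =>
        hasDerivAt_ft hpn.1 hpn.2.summable (hm2 (n + 1)) s
      have hd1' : ∀ s, HasDerivAt (D1f (ν (n + 1))) (D2f (ν (n + 1)) s) s := fun s =>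
        hasDerivAt_D1f hpn.1 hpn.2.summable (hm2 (n + 1)) s
      refine ⟨fun s => g s * ft (ν (n + 1)) s + ft (muN ν n) s * D1f (ν (n + 1)) s,
        fun s => (h s * ft (ν (n + 1)) s + g s * D1f (ν (n + 1)) s) +
          (g s * D1f (ν (n + 1)) s + ft (muN ν n) s * D2f (ν (n + 1)) s), ?_, ?_, ?_⟩
      · intro t
        rw [hfteq]
        exact (hg t).mul (hf' t)
      · intro t
        exact ((hh t).mul (hf' t)).add ((hg t).mul (hd1' t))
      · intro t ht
        obtain ⟨hF, hgb, hhb⟩ := hbds t ht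
        have hfb := hft (n + 1) t ht
        have hd1b := norm_D1f_le hpn.1 hpn.2.summable (hm2 (n + 1)) (hE (n + 1)) t
        have hd2b := norm_D2f_le hpn.1 hpn.2.summable (hm2 (n + 1)) t
        set Φ := ∑ i ∈ Finset.range (n + 1), m2 (ν i) with hΦdef
        set m := m2 (ν (n + 1)) with hmdef
        have hΦsucc : ∑ i ∈ Finset.range (n + 1 + 1), m2 (ν i) = Φ + m := by
          rw [Finset.sum_range_succ]
        set B := Real.exp (-(n : ℝ) * C * t ^ 2) with hBdef
        set Dd := Real.exp (-((n : ℝ) - 1) * C * t ^ 2) with hDdef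
        set Ee := Real.exp (-C * t ^ 2) with hEdef
        have hA : Real.exp (-((n : ℝ) + 1) * C * t ^ 2) = B * Ee := by
          rw [hBdef, hEdef, ← Real.exp_add]
          congr 1
          ring
        have hBD : B = Dd * Ee := by
          rw [hBdef, hDdef, hEdef, ← Real.exp_add]
          congr 1
          ring
        have hcast1 : -(((n + 1 : ℕ) : ℝ) + 1) * C * t ^ 2 =
            (-((n : ℝ) + 1) * C * t ^ 2) + (-C * t ^ 2) := by push_cast; ring
        have hcast2 : -(((n + 1 : ℕ) : ℝ)) * C * t ^ 2 =
            (-(n : ℝ) * C * t ^ 2) + (-C * t ^ 2) := by push_cast; ring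
        have hcast3 : -((((n + 1 : ℕ)) : ℝ) - 1) * C * t ^ 2 = -(n : ℝ) * C * t ^ 2 := by
          push_cast; ring
        have hBpos : 0 < B := Real.exp_pos _
        have hEpos : 0 < Ee := Real.exp_pos _
        have hDpos : 0 < Dd := Real.exp_pos _
        have hmnn : 0 ≤ m := hm2nn (n + 1)
        have hΦ0 : 0 ≤ Φ := hΦnn n
        have hpi := Real.pi_pos
        have hFA : ‖ft (muN ν n) t‖ ≤ B * Ee := by rw [← hA]; exact hF
        refine ⟨?_, ?_, ?_⟩
        · rw [hfteq]
          show ‖ft (muN ν n) t * ft (ν (n + 1)) t‖ ≤ _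
          rw [norm_mul, hcast1, Real.exp_add, ← hEdef, hA]
          exact mul_le_mul hFA hfb (norm_nonneg _) (by positivity)
        · show ‖g t * ft (ν (n + 1)) t + ft (muN ν n) t * D1f (ν (n + 1)) t‖ ≤ _
          rw [hΦsucc, hcast2, Real.exp_add, ← hEdef, ← hBdef]
          calc ‖g t * ft (ν (n + 1)) t + ft (muN ν n) t * D1f (ν (n + 1)) t‖ ≤
              ‖g t‖ * ‖ft (ν (n + 1)) t‖ + ‖ft (muN ν n) t‖ * ‖D1f (ν (n + 1)) t‖ := by
                refine (norm_add_le _ _).trans ?_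
                simp [norm_mul]
            _ ≤ (4 * Real.pi ^ 2 * Φ * |t| * B) * Ee +
                (B * Ee) * (4 * Real.pi ^ 2 * m * |t|) :=
                add_le_add (mul_le_mul hgb hfb (norm_nonneg _) (by positivity))
                  (mul_le_mul hFA hd1b (norm_nonneg _) (by positivity))
            _ = 4 * Real.pi ^ 2 * (Φ + m) * |t| * (B * Ee) := by ring
        · show ‖(h t * ft (ν (n + 1)) t + g t * D1f (ν (n + 1)) t) +
              (g t * D1f (ν (n + 1)) t + ft (muN ν n) t * D2f (ν (n + 1)) t)‖ ≤ _
          rw [hΦsucc, hcast2, hcast3, Real.exp_add, ← hEdef, ← hBdef]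
          have htri : ‖(h t * ft (ν (n + 1)) t + g t * D1f (ν (n + 1)) t) +
              (g t * D1f (ν (n + 1)) t + ft (muN ν n) t * D2f (ν (n + 1)) t)‖ ≤
              ‖h t‖ * ‖ft (ν (n + 1)) t‖ + ‖g t‖ * ‖D1f (ν (n + 1)) t‖ +
              (‖g t‖ * ‖D1f (ν (n + 1)) t‖ + ‖ft (muN ν n) t‖ * ‖D2f (ν (n + 1)) t‖) := by
            refine (norm_add_le _ _).trans
              (add_le_add ((norm_add_le _ _).trans ?_) ((norm_add_le _ _).trans ?_)) <;>
              simp [norm_mul]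
          have h1 : ‖h t‖ * ‖ft (ν (n + 1)) t‖ ≤
              (4 * Real.pi ^ 2 * Φ * B + 16 * Real.pi ^ 4 * Φ ^ 2 * Dd * t ^ 2) * Ee :=
            mul_le_mul hhb hfb (norm_nonneg _) (by positivity)
          have h2 : ‖g t‖ * ‖D1f (ν (n + 1)) t‖ ≤
              (4 * Real.pi ^ 2 * Φ * |t| * B) * (4 * Real.pi ^ 2 * m * |t|) :=
            mul_le_mul hgb hd1b (norm_nonneg _) (by positivity)
          have h3 : ‖ft (muN ν n) t‖ * ‖D2f (ν (n + 1)) t‖ ≤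
              (B * Ee) * (4 * Real.pi ^ 2 * m) :=
            mul_le_mul hFA hd2b (norm_nonneg _) (by positivity)
          have hDE : Dd * Ee = B := hBD.symm
          have habs2 : |t| * |t| = t ^ 2 := by rw [← sq_abs t]; ring
          have hX : (4 * Real.pi ^ 2 * Φ * B + 16 * Real.pi ^ 4 * Φ ^ 2 * Dd * t ^ 2) * Ee +
              (4 * Real.pi ^ 2 * Φ * |t| * B) * (4 * Real.pi ^ 2 * m * |t|) +
              ((4 * Real.pi ^ 2 * Φ * |t| * B) * (4 * Real.pi ^ 2 * m * |t|) +
                (B * Ee) * (4 * Real.pi ^ 2 * m)) =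
              4 * Real.pi ^ 2 * (Φ + m) * (B * Ee) +
              16 * Real.pi ^ 4 * (Φ ^ 2 + 2 * Φ * m) * B * t ^ 2 := by
            calc (4 * Real.pi ^ 2 * Φ * B + 16 * Real.pi ^ 4 * Φ ^ 2 * Dd * t ^ 2) * Ee +
                (4 * Real.pi ^ 2 * Φ * |t| * B) * (4 * Real.pi ^ 2 * m * |t|) +
                ((4 * Real.pi ^ 2 * Φ * |t| * B) * (4 * Real.pi ^ 2 * m * |t|) +
                  (B * Ee) * (4 * Real.pi ^ 2 * m)) =
                4 * Real.pi ^ 2 * (Φ + m) * (B * Ee) +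
                16 * Real.pi ^ 4 * Φ ^ 2 * (Dd * Ee) * t ^ 2 +
                32 * Real.pi ^ 4 * Φ * m * (|t| * |t|) * B := by ring
              _ = _ := by rw [hDE, habs2]; ring
          have hsq : Φ ^ 2 + 2 * Φ * m ≤ (Φ + m) ^ 2 := by nlinarith [sq_nonneg m]
          calc ‖(h t * ft (ν (n + 1)) t + g t * D1f (ν (n + 1)) t) +
              (g t * D1f (ν (n + 1)) t + ft (muN ν n) t * D2f (ν (n + 1)) t)‖ ≤
              (4 * Real.pi ^ 2 * Φ * B + 16 * Real.pi ^ 4 * Φ ^ 2 * Dd * t ^ 2) * Ee +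
              (4 * Real.pi ^ 2 * Φ * |t| * B) * (4 * Real.pi ^ 2 * m * |t|) +
              ((4 * Real.pi ^ 2 * Φ * |t| * B) * (4 * Real.pi ^ 2 * m * |t|) +
                (B * Ee) * (4 * Real.pi ^ 2 * m)) :=
              htri.trans (add_le_add (add_le_add h1 h2) (add_le_add h2 h3))
            _ = 4 * Real.pi ^ 2 * (Φ + m) * (B * Ee) +
                16 * Real.pi ^ 4 * (Φ ^ 2 + 2 * Φ * m) * B * t ^ 2 := hX
            _ ≤ 4 * Real.pi ^ 2 * (Φ + m) * (B * Ee) +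
                16 * Real.pi ^ 4 * (Φ + m) ^ 2 * B * t ^ 2 := by
                have hnn : (0:ℝ) ≤ 16 * Real.pi ^ 4 * B * t ^ 2 := by positivity
                nlinarith [mul_le_mul_of_nonneg_right hsq hnn]
  intro n hn t ht
  obtain ⟨g, h, hg, hh, hbds⟩ := key n
  obtain ⟨-, -, h3⟩ := hbds t ht
  have hd : iteratedDeriv 2 (ft (muN ν n)) t = h t := by
    rw [show (2 : ℕ) = 1 + 1 from rfl, iteratedDeriv_succ, iteratedDeriv_one]
    have e1 : deriv (ft (muN ν n)) = g := funext fun s => (hg s).deriv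
    rw [e1]
    exact (hh t).deriv
  rw [hd, ← sq_abs t] at *
  calc ‖h t‖ ≤ _ := h3
    _ ≤ _ := by rw [sq_abs]
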